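/- Let f be a signature of arity n of product type (f ∈ 𝒫). Let H be the 2×2 matrix [[1,1],[1,−1]] and let f̂ = H^{⊗n}f, i.e., f̂(y₁,…,yₙ) = Σ_{x ∈ {0,1}ⁿ} (∏ᵢ H_{yᵢ,xᵢ}) f(x). If f̂ satisfies the Parity Condition, then f is affine (f ∈ 𝒜). -/
import Mathlib

/-- `h` is in `ℰ`: its support is contained in a pair of antipodal points
`{α, ᾱ}` (over `ℤ₂`, the complement `ᾱ` is `α + 1`). -/
def InE {ι : Type*} (h : (ι → ZMod 2) → ℂ) : Prop :=
  ∃ α : ι → ZMod 2, ∀ x, h x ≠ 0 → x = α ∨ x = α + 1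

/-- `f` is of product type (`f ∈ 𝒫`): it factors over a partition of its
variables into signatures from `ℰ`. -/
def IsProductType {ι : Type*} [Fintype ι] [DecidableEq ι]
    (f : (ι → ZMod 2) → ℂ) : Prop :=
  ∃ (k : ℕ) (I : Fin k → Finset ι)
    (g : (j : Fin k) → ({i // i ∈ I j} → ZMod 2) → ℂ),
    (∀ j, (I j).Nonempty) ∧
    (∀ j j', j ≠ j' → Disjoint (I j) (I j')) ∧
    (∀ i : ι, ∃ j, i ∈ I j) ∧
    (∀ j, InE (g j)) ∧
    ∀ x : ι → ZMod 2, f x = ∏ j, g j (fun i => x i.1)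

/-- `𝔦^r` for `r ∈ ℤ₄`; well defined since `𝔦⁴ = 1`. -/
noncomputable def iPow (r : ZMod 4) : ℂ := Complex.I ^ r.val

/-- View `0, 1 ∈ ℤ₂` as elements of `ℤ₄`. -/
def z2z4 (a : ZMod 2) : ZMod 4 := (a.val : ZMod 4)

/-- Evaluation at a `{0,1}`-point of the multilinear polynomial over `ℤ₄` whose
coefficient on the monomial `∏_{i ∈ S} xᵢ` is `c S`. -/
def evalML4 {ι : Type*} [Fintype ι] [DecidableEq ι]
    (c : Finset ι → ZMod 4) (x : ι → ZMod 2) : ZMod 4 :=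
  ∑ S : Finset ι, c S * ∏ i ∈ S, z2z4 (x i)

/-- `x` extended by a final coordinate `1` (at `none`). -/
def extend1 {ι : Type*} (x : ι → ZMod 2) : Option ι → ZMod 2 := fun o => o.elim 1 x

/-- A signature is affine if it is `λ · χ_{A(x,1)ᵀ = 0} · 𝔦^{Q(x)}` for a matrix `A`
over `ℤ₂` and a multilinear polynomial `Q` over `ℤ₄` of total degree at most 2
whose cross terms all have even coefficients. -/
def IsAffine {ι : Type*} [Fintype ι] [DecidableEq ι] (f : (ι → ZMod 2) → ℂ) : Prop :=
  ∃ (lam : ℂ) (m : ℕ) (A : Matrix (Fin m) (Option ι) (ZMod 2))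
    (c : Finset ι → ZMod 4),
    (∀ S : Finset ι, 2 < S.card → c S = 0) ∧
    (∀ S : Finset ι, S.card = 2 → ∃ t : ZMod 4, c S = 2 * t) ∧
    ∀ x : ι → ZMod 2,
      f x = lam * (if A.mulVec (extend1 x) = 0 then 1 else 0) * iPow (evalML4 c x)

/-- The Hamming weight of `x ∈ ℤ₂ⁿ`. -/
def wt {n : ℕ} (x : Fin n → ZMod 2) : ℕ :=
  (Finset.univ.filter (fun i => x i = 1)).card

private lemma zmod2_cases : ∀ a : ZMod 2, a = 0 ∨ a = 1 := by decide

private lemma I_pow_mod (m : ℕ) : Complex.I ^ (m % 4) = Complex.I ^ m := by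
  conv_rhs => rw [← Nat.div_add_mod m 4]
  rw [pow_add, pow_mul, Complex.I_pow_four, one_pow, one_mul]

private lemma iPow_add (r t : ZMod 4) : iPow (r + t) = iPow r * iPow t := by
  unfold iPow
  rw [ZMod.val_add, I_pow_mod, pow_add]

private lemma iPow_sum {α : Type*} (s : Finset α) (q : α → ZMod 4) :
    iPow (∑ j ∈ s, q j) = ∏ j ∈ s, iPow (q j) := by
  classical
  induction s using Finset.cons_induction with
  | empty => simp [iPow]
  | cons a s ha ih => rw [Finset.sum_cons, Finset.prod_cons, iPow_add, ih]

private noncomputable def sgn (a : ZMod 2) : ℂ := iPow (2 * z2z4 a)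

private lemma sgn_zero : sgn 0 = 1 := by
  have h : (2 * z2z4 0 : ZMod 4) = 0 := by decide
  rw [sgn, h]; simp [iPow]

private lemma sgn_one : sgn 1 = -1 := by
  have h : (2 * z2z4 1 : ZMod 4) = 2 := by decide
  rw [sgn, h]
  show Complex.I ^ (2 : ZMod 4).val = -1
  have h2 : (2 : ZMod 4).val = 2 := rfl
  rw [h2, Complex.I_sq]

private lemma sgn_add (p q : ZMod 2) : sgn (p + q) = sgn p * sgn q := by
  rcases zmod2_cases p with hp | hp <;> rcases zmod2_cases q with hq | hq <;>
    rw [hp, hq] <;>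
    simp [sgn_zero, sgn_one, show (1 + 1 : ZMod 2) = 0 by decide]

private lemma sum_support_pair {σ : Type*} [Fintype σ] [DecidableEq σ]
    (h : (σ → ZMod 2) → ℂ) (w : (σ → ZMod 2) → ℂ) (β : σ → ZMod 2) (hβ : β ≠ β + 1)
    (hs : ∀ z, h z ≠ 0 → z = β ∨ z = β + 1) :
    ∑ z, w z * h z = w β * h β + w (β + 1) * h (β + 1) := by
  classical
  rw [← Finset.sum_subset (Finset.subset_univ ({β, β + 1} : Finset (σ → ZMod 2)))
      (by
        intro z _ hz
        rcases eq_or_ne (h z) 0 with h0 | h0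
        · rw [h0, mul_zero]
        · exact absurd (by
            rcases hs z h0 with h1 | h1 <;> simp [h1]) hz)]
  rw [Finset.sum_pair hβ]

private lemma hat_factor {n k : ℕ} {I : Fin k → Finset (Fin n)}
    (g : ∀ j, ({i // i ∈ I j} → ZMod 2) → ℂ)
    (J : Fin n → Fin k) (hJ : ∀ i, i ∈ I (J i))
    (hJu : ∀ {i : Fin n} {j : Fin k}, i ∈ I j → J i = j)
    (y : Fin n → ZMod 2) :
    ∑ x : Fin n → ZMod 2,
        (∏ i, if y i = 1 ∧ x i = 1 then (-1 : ℂ) else 1) * ∏ j, g j (fun i => x i.1)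
      = ∏ j, ∑ z : {i // i ∈ I j} → ZMod 2,
          (∏ i : {i // i ∈ I j}, if y i.1 = 1 ∧ z i = 1 then (-1 : ℂ) else 1) * g j z := by
  classical
  have hres : ∀ (p : ∀ j, {i // i ∈ I j} → ZMod 2) (j) (i : {i // i ∈ I j}),
      p (J i.1) ⟨i.1, hJ i.1⟩ = p j i := by
    intro p j i
    obtain ⟨iv, hiv⟩ := i
    have hji : J iv = j := hJu hiv
    subst hji
    rfl
  have hfib : ∀ j, Finset.univ.filter (fun i => J i = j) = I j := by
    intro j
    ext i
    simp only [Finset.mem_filter, Finset.mem_univ, true_and]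
    exact ⟨fun h => h ▸ hJ i, fun h => hJu h⟩
  rw [Fintype.prod_sum]
  refine (Fintype.sum_bijective (fun p (i : Fin n) => p (J i) ⟨i, hJ i⟩)
    ⟨?_, ?_⟩ _ _ ?_).symm
  · intro p p' h
    funext j i
    have h1 : p (J i.1) ⟨i.1, hJ i.1⟩ = p' (J i.1) ⟨i.1, hJ i.1⟩ := congrFun h i.1
    rw [hres p j i, hres p' j i] at h1
    exact h1
  · intro x
    exact ⟨fun j i => x i.1, rfl⟩
  · intro p
    show ∏ j, (∏ i : {i // i ∈ I j}, if y i.1 = 1 ∧ p j i = 1 then (-1 : ℂ) else 1) * g j (p j)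
      = (∏ i, if y i = 1 ∧ p (J i) ⟨i, hJ i⟩ = 1 then (-1 : ℂ) else 1)
        * ∏ j, g j (fun i : {i // i ∈ I j} => p (J i.1) ⟨i.1, hJ i.1⟩)
    have hH : (∏ i, if y i = 1 ∧ p (J i) ⟨i, hJ i⟩ = 1 then (-1 : ℂ) else 1)
        = ∏ j, ∏ i : {i // i ∈ I j}, if y i.1 = 1 ∧ p j i = 1 then (-1 : ℂ) else 1 := by
      rw [← Finset.prod_fiberwise Finset.univ J
        (fun i => if y i = 1 ∧ p (J i) ⟨i, hJ i⟩ = 1 then (-1 : ℂ) else 1)]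
      refine Finset.prod_congr rfl fun j _ => ?_
      rw [hfib j, ← Finset.prod_coe_sort (I j)
        (fun i => if y i = 1 ∧ p (J i) ⟨i, hJ i⟩ = 1 then (-1 : ℂ) else 1)]
      refine Finset.prod_congr rfl fun i _ => ?_
      simp only [hres p j i]
    rw [Finset.prod_mul_distrib, hH]
    congr 1
    refine Finset.prod_congr rfl fun j _ => ?_
    congr 1
    funext i
    exact (hres p j i).symm

private lemma evalML4_singletons {n : ℕ} (d : Fin n → ZMod 4) (x : Fin n → ZMod 2) :
    evalML4 (fun S => ∑ i, if S = {i} then d i else 0) x = ∑ i, d i * z2z4 (x i) := by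
  classical
  unfold evalML4
  simp_rw [Finset.sum_mul]
  rw [Finset.sum_comm]
  refine Finset.sum_congr rfl fun i _ => ?_
  have h : ∀ S : Finset (Fin n),
      (if S = {i} then d i else 0) * ∏ i' ∈ S, z2z4 (x i')
        = if S = ({i} : Finset (Fin n)) then d i * ∏ i' ∈ S, z2z4 (x i') else 0 := by
    intro S; split <;> simp
  simp_rw [h]
  rw [Finset.sum_ite_eq' Finset.univ ({i} : Finset (Fin n))
    (fun S => d i * ∏ i' ∈ S, z2z4 (x i'))]
  simp

/-- `f̂ = H^{⊗n} f` where `H = [[1,1],[1,-1]]`, i.e. the entry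
`H_{y,x}` is `-1` if `y = x = 1` and `1` otherwise. -/
theorem affine_of_product_type_with_parity (n : ℕ)
    (f : (Fin n → ZMod 2) → ℂ) (hf : IsProductType f)
    (fhat : (Fin n → ZMod 2) → ℂ)
    (hfhat : ∀ y, fhat y = ∑ x : Fin n → ZMod 2,
      (∏ i, if y i = 1 ∧ x i = 1 then (-1 : ℂ) else 1) * f x)
    (hparity : (∀ y, Odd (wt y) → fhat y = 0) ∨ (∀ y, Even (wt y) → fhat y = 0)) :
    IsAffine f := by
  classical
  by_cases hzero : ∀ x, f x = 0
  · exact ⟨0, 0, 0, fun _ => 0, fun _ _ => rfl, fun _ _ => ⟨0, by ring⟩,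
      fun x => by rw [hzero x]; ring⟩
  push_neg at hzero
  obtain ⟨x₀, hx₀⟩ := hzero
  obtain ⟨k, I, g, hne, hdisj, hcover, hE, hprod⟩ := hf
  choose J hJ using hcover
  have hJu : ∀ {i : Fin n} {j : Fin k}, i ∈ I j → J i = j := by
    intro i j hij
    by_contra hcon
    exact Finset.disjoint_left.mp (hdisj _ _ hcon) (hJ i) hij
  choose r hr using hne
  have hJr : ∀ j, J (r j) = j := fun j => hJu (hr j)
  have hax : ∀ j, g j (fun i => x₀ i.1) ≠ 0 := by
    intro j hj
    exact hx₀ (by rw [hprod x₀]; exact Finset.prod_eq_zero (Finset.mem_univ j) hj)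
  have haddone : ∀ {σ : Type} (v : σ → ZMod 2), v + 1 + 1 = v := by
    intro σ v; funext i
    exact (by decide : ∀ c : ZMod 2, c + 1 + 1 = c) (v i)
  have hsupp : ∀ j z, g j z ≠ 0 →
      z = (fun i => x₀ i.1) ∨ z = (fun i => x₀ i.1) + 1 := by
    intro j z hz
    obtain ⟨α, hα⟩ := hE j
    rcases hα _ (hax j) with hb | hb <;> rcases hα z hz with h | h
    · left; rw [h, hb]
    · right; rw [h, hb]
    · right; rw [h, hb, haddone]
    · left; rw [h, hb]
  have hBne : ∀ j, (fun i : {i // i ∈ I j} => x₀ i.1) ≠ (fun i => x₀ i.1) + 1 := by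
    intro j hEq
    exact (by decide : ∀ c : ZMod 2, ¬c = c + 1) _ (congrFun hEq ⟨r j, hr j⟩)
  -- the value of `fhat` at the special points
  have hval : ∀ ε : Fin k → ZMod 2,
      fhat (fun i => if i = r (J i) then ε (J i) else 0)
        = ∏ j, (if ε j = 0
            then g j (fun i => x₀ i.1) + g j ((fun i => x₀ i.1) + 1)
            else if x₀ (r j) = 1
              then g j ((fun i => x₀ i.1) + 1) - g j (fun i => x₀ i.1)
              else g j (fun i => x₀ i.1) - g j ((fun i => x₀ i.1) + 1)) := by
    intro ε
    rw [hfhat]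
    have h1 : ∑ x : Fin n → ZMod 2,
        (∏ i, if (if i = r (J i) then ε (J i) else 0) = 1 ∧ x i = 1 then (-1 : ℂ) else 1) * f x
        = ∑ x : Fin n → ZMod 2,
        (∏ i, if (if i = r (J i) then ε (J i) else 0) = 1 ∧ x i = 1 then (-1 : ℂ) else 1)
          * ∏ j, g j (fun i => x i.1) :=
      Finset.sum_congr rfl fun x _ => by rw [hprod x]
    rw [h1, hat_factor g J hJ @hJu]
    refine Finset.prod_congr rfl fun j _ => ?_
    have hw : ∀ z : {i // i ∈ I j} → ZMod 2,
        (∏ i : {i // i ∈ I j},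
          if (if i.1 = r (J i.1) then ε (J i.1) else 0) = 1 ∧ z i = 1 then (-1 : ℂ) else 1)
        = if ε j = 1 ∧ z ⟨r j, hr j⟩ = 1 then (-1 : ℂ) else 1 := by
      intro z
      rw [Finset.prod_eq_single_of_mem (⟨r j, hr j⟩ : {i // i ∈ I j}) (Finset.mem_univ _)
        (by
          intro i _ hne2
          have hi1 : i.1 ≠ r j := fun hh => hne2 (Subtype.ext hh)
          have hJi : J i.1 = j := hJu i.2
          rw [hJi, if_neg hi1]
          simp)]
      rw [hJr j, if_pos rfl]
    calc ∑ z : {i // i ∈ I j} → ZMod 2,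
          (∏ i : {i // i ∈ I j},
            if (if i.1 = r (J i.1) then ε (J i.1) else 0) = 1 ∧ z i = 1 then (-1 : ℂ) else 1)
            * g j z
        = ∑ z : {i // i ∈ I j} → ZMod 2,
          (if ε j = 1 ∧ z ⟨r j, hr j⟩ = 1 then (-1 : ℂ) else 1) * g j z :=
          Finset.sum_congr rfl fun z _ => by rw [hw z]
      _ = _ := by
          rw [sum_support_pair (g j) _ _ (hBne j) (hsupp j)]
          have e1 : (fun i : {i // i ∈ I j} => x₀ i.1) ⟨r j, hr j⟩ = x₀ (r j) := rfl
          have e2 : ((fun i : {i // i ∈ I j} => x₀ i.1) + 1) ⟨r j, hr j⟩ = x₀ (r j) + 1 := rfl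
          rw [e1, e2]
          rcases zmod2_cases (ε j) with he | he <;> rw [he]
          · norm_num
          · rcases zmod2_cases (x₀ (r j)) with hx | hx <;> rw [hx]
            · norm_num [show ((0 : ZMod 2) + 1 = 1) by decide]
              ring
            · norm_num [show ¬((1 : ZMod 2) + 1 = 1) by decide, show ¬((1:ZMod 2) = 0) by decide,
                show ¬((2 : ZMod 2) = 1) by decide]
              ring
  -- the weight of the special points
  have hwt : ∀ ε : Fin k → ZMod 2,
      wt (fun i => if i = r (J i) then ε (J i) else 0)
        = (Finset.univ.filter fun j => ε j = 1).card := by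
    intro ε
    unfold wt
    refine Finset.card_bij' (fun i _ => J i) (fun j _ => r j) ?_ ?_ ?_ ?_
    · intro i hi
      simp only [Finset.mem_filter, Finset.mem_univ, true_and] at hi ⊢
      by_cases h : i = r (J i)
      · rw [if_pos h] at hi; exact hi
      · rw [if_neg h] at hi; exact absurd hi (by decide)
    · intro j hj
      simp only [Finset.mem_filter, Finset.mem_univ, true_and] at hj ⊢
      rw [hJr j, if_pos rfl]
      exact hj
    · intro i hi
      simp only [Finset.mem_filter, Finset.mem_univ, true_and] at hi
      by_cases h : i = r (J i)
      · exact h.symm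
      · rw [if_neg h] at hi; exact absurd hi (by decide)
    · intro j _
      exact hJr j
  -- the dichotomy
  have hdich : ∀ j, g j ((fun i => x₀ i.1) + 1) = g j (fun i => x₀ i.1) ∨
      g j ((fun i => x₀ i.1) + 1) = -g j (fun i => x₀ i.1) := by
    intro j₀
    by_contra hcon
    push_neg at hcon
    obtain ⟨hc1, hc2⟩ := hcon
    have hc1' : g j₀ (fun i => x₀ i.1) - g j₀ ((fun i => x₀ i.1) + 1) ≠ 0 := by
      intro h; exact hc1 (by linear_combination -h)
    have hc2' : g j₀ (fun i => x₀ i.1) + g j₀ ((fun i => x₀ i.1) + 1) ≠ 0 := by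
      intro h; exact hc2 (by linear_combination h)
    have hab1 : ∀ j, g j (fun i => x₀ i.1) + g j ((fun i => x₀ i.1) + 1) = 0 →
        g j (fun i => x₀ i.1) - g j ((fun i => x₀ i.1) + 1) ≠ 0 := by
      intro j h1 h2
      exact hax j (by linear_combination (h1 + h2) / 2)
    set ε₀ : Fin k → ZMod 2 :=
      fun j => if g j (fun i => x₀ i.1) + g j ((fun i => x₀ i.1) + 1) = 0 then 1 else 0 with hε₀
    -- nonvanishing for any bit at j₀
    have key : ∀ bit : ZMod 2,
        fhat (fun i => if i = r (J i) then (Function.update ε₀ j₀ bit) (J i) else 0) ≠ 0 := by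
      intro bit
      rw [hval]
      rw [Finset.prod_ne_zero_iff]
      intro j _
      by_cases hjj : j = j₀
      · subst hjj
        rw [Function.update_self]
        rcases zmod2_cases bit with hb | hb <;> rw [hb]
        · rw [if_pos rfl]; exact hc2'
        · rw [if_neg (by decide)]
          split
          · intro h; exact hc1' (by linear_combination -h)
          · exact hc1'
      · rw [Function.update_of_ne hjj]
        by_cases hz : g j (fun i => x₀ i.1) + g j ((fun i => x₀ i.1) + 1) = 0
        · have he : ε₀ j = 1 := by simp only [hε₀]; exact if_pos hz
          rw [he, if_neg (by decide : ¬(1 : ZMod 2) = 0)]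
          split
          · intro h; exact hab1 j hz (by linear_combination -h)
          · exact hab1 j hz
        · have he : ε₀ j = 0 := by simp only [hε₀]; exact if_neg hz
          rw [he, if_pos rfl]
          exact hz
    -- counting
    set m₁ : ℕ := ((Finset.univ.erase j₀).filter fun j => ε₀ j = 1).card with hm₁
    have hcount : ∀ bit : ZMod 2,
        (Finset.univ.filter fun j => Function.update ε₀ j₀ bit j = 1).card
          = m₁ + (if bit = 1 then 1 else 0) := by
      intro bit
      have hfe : (Finset.univ.erase j₀).filter (fun j => Function.update ε₀ j₀ bit j = 1)
          = (Finset.univ.erase j₀).filter fun j => ε₀ j = 1 := by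
        apply Finset.filter_congr
        intro j hj
        rw [Function.update_of_ne (Finset.ne_of_mem_erase hj)]
      rw [← Finset.insert_erase (Finset.mem_univ j₀), Finset.filter_insert, hfe]
      rw [Function.update_self]
      split
      · rw [Finset.card_insert_of_notMem (by
          intro hmem
          exact (Finset.mem_erase.mp (Finset.mem_of_mem_filter _ hmem)).1 rfl)]
      · rw [add_zero]
    rcases hparity with hp | hp
    · refine key (if Odd m₁ then 0 else 1) (hp _ ?_)
      rw [hwt, hcount]
      by_cases hm : Odd m₁
      · rw [if_pos hm] at *
        rw [if_neg (by decide : ¬(0 : ZMod 2) = 1), add_zero]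
        exact hm
      · rw [if_neg hm] at *
        rw [if_pos rfl]
        rw [Nat.odd_iff] at hm ⊢
        omega
    · refine key (if Even m₁ then 0 else 1) (hp _ ?_)
      rw [hwt, hcount]
      by_cases hm : Even m₁
      · rw [if_pos hm] at *
        rw [if_neg (by decide : ¬(0 : ZMod 2) = 1), add_zero]
        exact hm
      · rw [if_neg hm] at *
        rw [if_pos rfl]
        rw [Nat.even_iff] at hm ⊢
        omega
  set sj : Fin k → ZMod 2 :=
    fun j => if g j ((fun i => x₀ i.1) + 1) = g j (fun i => x₀ i.1) then 0 else 1 with hsj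
  have hbs : ∀ j, g j ((fun i => x₀ i.1) + 1) = g j (fun i => x₀ i.1) * sgn (sj j) := by
    intro j
    by_cases h : g j ((fun i => x₀ i.1) + 1) = g j (fun i => x₀ i.1)
    · have : sj j = 0 := by simp only [hsj]; exact if_pos h
      rw [this, sgn_zero, mul_one, h]
    · have : sj j = 1 := by simp only [hsj]; exact if_neg h
      rw [this, sgn_one]
      rcases hdich j with h1 | h1
      · exact absurd h1 h
      · rw [h1]; ring
  set u : Fin n → ZMod 2 := fun i => if i = r (J i) then sj (J i) else 0 with hu
  set A : Matrix (Fin n) (Option (Fin n)) (ZMod 2) :=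
    Matrix.of fun i o => o.elim (x₀ i + x₀ (r (J i)))
      (fun i' => (if i' = i then 1 else 0) + (if i' = r (J i) then 1 else 0)) with hA
  set c : Finset (Fin n) → ZMod 4 :=
    fun S => ∑ i, if S = {i} then (2 : ZMod 4) * z2z4 (u i) else 0 with hc
  have hcz : ∀ S : Finset (Fin n), S.card ≠ 1 → c S = 0 := by
    intro S hS
    simp only [hc]
    refine Finset.sum_eq_zero fun i _ => if_neg fun h => ?_
    rw [h] at hS
    exact hS (Finset.card_singleton i)
  -- mulVec computation
  have hmv : ∀ (v : Fin n → ZMod 2) i, A.mulVec (extend1 v) i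
      = (x₀ i + x₀ (r (J i))) + (v i + v (r (J i))) := by
    intro v i
    show ∑ o : Option (Fin n), A i o * extend1 v o = _
    rw [Fintype.sum_option]
    have e0 : A i none * extend1 v none = x₀ i + x₀ (r (J i)) := by
      simp [hA, extend1]
    have e1 : ∀ i', A i (some i') * extend1 v (some i')
        = (if i' = i then v i' else 0) + (if i' = r (J i) then v i' else 0) := by
      intro i'
      show ((if i' = i then 1 else 0) + (if i' = r (J i) then 1 else 0)) * v i' = _
      rw [add_mul, ite_mul, ite_mul, one_mul, zero_mul]
    rw [e0]
    simp_rw [e1]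
    rw [Finset.sum_add_distrib, Finset.sum_ite_eq' Finset.univ i v,
      Finset.sum_ite_eq' Finset.univ (r (J i)) v]
    simp
  -- characterization of the support
  have hiff : ∀ x : Fin n → ZMod 2, A.mulVec (extend1 x) = 0 ↔
      ∀ j, (fun i : {i // i ∈ I j} => x i.1) = (fun i => x₀ i.1) ∨
        (fun i : {i // i ∈ I j} => x i.1) = (fun i => x₀ i.1) + 1 := by
    intro x
    constructor
    · intro h0 j
      have hrow : ∀ i : Fin n, (x₀ i + x₀ (r (J i))) + (x i + x (r (J i))) = 0 := by
        intro i
        have := congrFun h0 i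
        rw [hmv x i] at this
        exact this
      rcases zmod2_cases (x (r j) + x₀ (r j)) with ht | ht
      · left
        funext i
        have h1 := hrow i.1
        rw [hJu i.2] at h1
        exact (by decide : ∀ p q s t : ZMod 2, (q + t) + (p + s) = 0 → s + t = 0 → p = q)
          (x i.1) (x₀ i.1) (x (r j)) (x₀ (r j)) h1 ht
      · right
        show (fun i : {i // i ∈ I j} => x i.1) = fun i => x₀ i.1 + 1
        funext i
        have h1 := hrow i.1
        rw [hJu i.2] at h1
        exact (by decide : ∀ p q s t : ZMod 2, (q + t) + (p + s) = 0 → s + t = 1 → p = q + 1)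
          (x i.1) (x₀ i.1) (x (r j)) (x₀ (r j)) h1 ht
    · intro hC
      funext i
      rw [hmv x i]
      show _ = (0 : ZMod 2)
      rcases hC (J i) with hc1 | hc1
      · have h1 : x i = x₀ i := congrFun hc1 ⟨i, hJ i⟩
        have h2 : x (r (J i)) = x₀ (r (J i)) := congrFun hc1 ⟨r (J i), hr (J i)⟩
        rw [h1, h2]
        exact (by decide : ∀ p q : ZMod 2, (p + q) + (p + q) = 0) _ _
      · have h1 : x i = x₀ i + 1 := congrFun hc1 ⟨i, hJ i⟩
        have h2 : x (r (J i)) = x₀ (r (J i)) + 1 := congrFun hc1 ⟨r (J i), hr (J i)⟩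
        rw [h1, h2]
        exact (by decide : ∀ p q : ZMod 2, (p + q) + ((p + 1) + (q + 1)) = 0) _ _
  -- the quadratic form evaluation
  have hiPowQ : ∀ x : Fin n → ZMod 2,
      iPow (evalML4 c x) = ∏ j, sgn (sj j * x (r j)) := by
    intro x
    have hQ : evalML4 c x = ∑ i, (2 : ZMod 4) * z2z4 (u i * x i) := by
      rw [hc, evalML4_singletons (fun i => (2 : ZMod 4) * z2z4 (u i)) x]
      exact Finset.sum_congr rfl fun i _ =>
        (by decide : ∀ a b : ZMod 2, (2 : ZMod 4) * z2z4 a * z2z4 b = 2 * z2z4 (a * b)) _ _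
    rw [hQ, iPow_sum]
    have hterm : ∀ i : Fin n, iPow (2 * z2z4 (u i * x i)) = sgn (u i * x i) := fun i => rfl
    simp_rw [hterm]
    rw [← Finset.prod_fiberwise Finset.univ J (fun i => sgn (u i * x i))]
    refine Finset.prod_congr rfl fun j _ => ?_
    rw [Finset.prod_eq_single_of_mem (r j)
      (Finset.mem_filter.mpr ⟨Finset.mem_univ _, hJr j⟩)
      (by
        intro i hi hne2
        have hJi : J i = j := (Finset.mem_filter.mp hi).2
        have hui : u i = 0 := by
          simp only [hu]
          rw [if_neg]
          intro h
          rw [hJi] at h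
          exact hne2 h
        rw [hui, zero_mul, sgn_zero])]
    have hur : u (r j) = sj j := by
      simp only [hu]
      rw [hJr j, if_pos rfl]
    rw [hur]
  -- the final form
  refine ⟨∏ j, g j (fun i => x₀ i.1) * sgn (sj j * x₀ (r j)), n, A, c,
    fun S hS => hcz S (by omega), fun S hS => ⟨0, by rw [hcz S (by omega), mul_zero]⟩, ?_⟩
  intro x
  by_cases hx : A.mulVec (extend1 x) = 0
  · rw [if_pos hx, mul_one, hiPowQ x, hprod x, ← Finset.prod_mul_distrib]
    refine Finset.prod_congr rfl fun j _ => ?_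
    rcases (hiff x).mp hx j with hc1 | hc1
    · rw [hc1]
      have hxr : x (r j) = x₀ (r j) := congrFun hc1 ⟨r j, hr j⟩
      rw [hxr, mul_assoc, ← sgn_add,
        (by decide : ∀ p : ZMod 2, p + p = 0) (sj j * x₀ (r j)), sgn_zero, mul_one]
    · rw [hc1, hbs j]
      have hxr : x (r j) = x₀ (r j) + 1 := congrFun hc1 ⟨r j, hr j⟩
      rw [hxr, mul_assoc, ← sgn_add,
        (by decide : ∀ p q : ZMod 2, p * q + p * (q + 1) = p) (sj j) (x₀ (r j))]
  · rw [if_neg hx, mul_zero, zero_mul]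
    have hC := (hiff x).not.mp hx
    push_neg at hC
    obtain ⟨j, hj1, hj2⟩ := hC
    have hgz : g j (fun i => x i.1) = 0 := by
      by_contra hgz
      rcases hsupp j _ hgz with h | h
      · exact hj1 h
      · exact hj2 h
    rw [hprod x]
    exact Finset.prod_eq_zero (Finset.mem_univ j) hgz
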